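/- arXiv:2505.12167 — 3 statements merged into one kernel-verified Lean document; each statement's English description precedes it below -/
import Mathlib

section
/- For a signal X of even length T perturbed only in its approximation Haar coefficients by δ_A, the change in the (unnormalized) even-lag autocorrelation satisfies ρ_A(2m) − ρ(2m) = Σ_{k=m+1}^{T/2} [ C^L_k δ_A(k−m) + C^L_{k−m} δ_A(k) + δ_A(k) δ_A(k−m) ], where ρ(l) = Σ_{t=1}^{T−l} X_{t+l} X_t. -/
/-!
The one-level Haar transform is orthogonal on each pair `(2k - 1, 2k)`, so an even-lag
autocorrelation, which only ever multiplies block `k` with block `k - m`, splits as the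
lag-`m` correlation of the approximation coefficients plus that of the detail coefficients.
Perturbing the approximation coefficients alone leaves the detail part unchanged, and
expanding `(C^L_k + δ_k)(C^L_{k-m} + δ_{k-m}) - C^L_k C^L_{k-m}` gives the claimed sum.
-/

open Finset

lemma Finset.sum_Icc_one_two_mul {M : Type*} [AddCommMonoid M] (f : ℕ → M) (n : ℕ) :
    ∑ t ∈ Icc 1 (2 * n), f t = ∑ j ∈ Icc 1 n, (f (2 * j - 1) + f (2 * j)) := by
  induction n with
  | zero => simp
  | succ n ih =>
    rw [show 2 * (n + 1) = 2 * n + 1 + 1 by ring, sum_Icc_succ_top (by omega),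
      sum_Icc_succ_top (by omega), ih, sum_Icc_succ_top (by omega), add_assoc,
      show 2 * n + 1 = 2 * (n + 1) - 1 by omega, show 2 * (n + 1) - 1 + 1 = 2 * (n + 1) by omega]

lemma Finset.sum_Icc_one_shift {M : Type*} [AddCommMonoid M] (f : ℕ → M) (n m : ℕ) :
    ∑ j ∈ Icc 1 (n - m), f (j + m) = ∑ k ∈ Icc (m + 1) n, f k := by
  rcases le_total m n with hmn | hnm
  · rw [show Icc (m + 1) n = (Icc 1 (n - m)).map (addRightEmbedding m) by
      rw [map_add_right_Icc, add_comm 1 m, Nat.sub_add_cancel hmn], sum_map]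
    rfl
  · rw [Nat.sub_eq_zero_of_le hnm, Icc_eq_empty (by omega), Icc_eq_empty (by omega),
      sum_empty, sum_empty]

lemma sum_lag_two_mul_eq_sum_blocks {R : Type*} [NonUnitalNonAssocSemiring R]
    (Y : ℕ → R) (n m : ℕ) :
    ∑ t ∈ Icc 1 (2 * n - 2 * m), Y (t + 2 * m) * Y t =
      ∑ k ∈ Icc (m + 1) n,
        (Y (2 * k - 1) * Y (2 * (k - m) - 1) + Y (2 * k) * Y (2 * (k - m))) := by
  rw [← Nat.mul_sub, sum_Icc_one_two_mul, ← sum_Icc_one_shift _ n m]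
  refine sum_congr rfl fun j hj => ?_
  rw [mem_Icc] at hj
  rw [Nat.add_sub_cancel, show 2 * j - 1 + 2 * m = 2 * (j + m) - 1 by omega, mul_add]

lemma haar_mul_add_mul (a b c d : ℝ) :
    (a + b) / √2 * ((c + d) / √2) + (a - b) / √2 * ((c - d) / √2) = a * c + b * d := by
  rw [div_mul_div_comm, div_mul_div_comm, Real.mul_self_sqrt zero_le_two]
  ring

theorem autocorrelation_change_approx_general
    (T : ℕ) (hTeven : Even T)
    (X XA CL CH δA : ℕ → ℝ)
    (hCL : ∀ k ∈ Finset.Icc 1 (T / 2),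
      CL k = (X (2 * k - 1) + X (2 * k)) / Real.sqrt 2)
    (hCH : ∀ k ∈ Finset.Icc 1 (T / 2),
      CH k = (X (2 * k - 1) - X (2 * k)) / Real.sqrt 2)
    (hXA1 : ∀ k ∈ Finset.Icc 1 (T / 2),
      XA (2 * k - 1) = (CL k + δA k) / Real.sqrt 2 + CH k / Real.sqrt 2)
    (hXA0 : ∀ k ∈ Finset.Icc 1 (T / 2),
      XA (2 * k) = (CL k + δA k) / Real.sqrt 2 - CH k / Real.sqrt 2)
    (ρ ρA : ℕ → ℝ)
    (hρ : ∀ l, ρ l = ∑ t ∈ Finset.Icc 1 (T - l), X (t + l) * X t)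
    (hρA : ∀ l, ρA l = ∑ t ∈ Finset.Icc 1 (T - l), XA (t + l) * XA t)
    (m : ℕ) :
    ρA (2 * m) - ρ (2 * m) =
      ∑ k ∈ Finset.Icc (m + 1) (T / 2),
        (CL k * δA (k - m) + CL (k - m) * δA k + δA k * δA (k - m)) := by
  have hT : 2 * (T / 2) - 2 * m = T - 2 * m := by rw [Nat.two_mul_div_two_of_even hTeven]
  have mem_lag {k} (hk : k ∈ Icc (m + 1) (T / 2)) : k - m ∈ Icc 1 (T / 2) := by
    rw [mem_Icc] at hk ⊢; omega
  have mem_self {k} (hk : k ∈ Icc (m + 1) (T / 2)) : k ∈ Icc 1 (T / 2) := by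
    rw [mem_Icc] at hk ⊢; omega
  have hX : ρ (2 * m) = ∑ k ∈ Icc (m + 1) (T / 2), (CL k * CL (k - m) + CH k * CH (k - m)) := by
    rw [hρ, ← hT, sum_lag_two_mul_eq_sum_blocks]
    refine sum_congr rfl fun k hk => ?_
    rw [hCL k (mem_self hk), hCL _ (mem_lag hk), hCH k (mem_self hk), hCH _ (mem_lag hk),
      haar_mul_add_mul]
  have hXA : ρA (2 * m) = ∑ k ∈ Icc (m + 1) (T / 2),
      ((CL k + δA k) * (CL (k - m) + δA (k - m)) + CH k * CH (k - m)) := by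
    rw [hρA, ← hT, sum_lag_two_mul_eq_sum_blocks]
    refine sum_congr rfl fun k hk => ?_
    rw [hXA1 k (mem_self hk), hXA1 _ (mem_lag hk), hXA0 k (mem_self hk), hXA0 _ (mem_lag hk),
      ← add_div, ← add_div, ← sub_div, ← sub_div, haar_mul_add_mul]
  rw [hX, hXA, ← sum_sub_distrib]
  exact sum_congr rfl fun k _ => by ring

/-- Change in even-lag autocorrelation under approximation-coefficient
perturbations. -/
theorem autocorrelation_change_approx
    (T : ℕ) (hT : 0 < T) (hTeven : Even T)
    (X XA CL CH δA : ℕ → ℝ)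
    (hCL : ∀ k ∈ Finset.Icc 1 (T / 2),
      CL k = (X (2 * k - 1) + X (2 * k)) / Real.sqrt 2)
    (hCH : ∀ k ∈ Finset.Icc 1 (T / 2),
      CH k = (X (2 * k - 1) - X (2 * k)) / Real.sqrt 2)
    (hXA1 : ∀ k ∈ Finset.Icc 1 (T / 2),
      XA (2 * k - 1) = (CL k + δA k) / Real.sqrt 2 + CH k / Real.sqrt 2)
    (hXA0 : ∀ k ∈ Finset.Icc 1 (T / 2),
      XA (2 * k) = (CL k + δA k) / Real.sqrt 2 - CH k / Real.sqrt 2)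
    (ρ ρA : ℕ → ℝ)
    (hρ : ∀ l, ρ l = ∑ t ∈ Finset.Icc 1 (T - l), X (t + l) * X t)
    (hρA : ∀ l, ρA l = ∑ t ∈ Finset.Icc 1 (T - l), XA (t + l) * XA t)
    (m : ℕ) (hm : m + 1 ≤ T / 2) :
    ρA (2 * m) - ρ (2 * m) =
      ∑ k ∈ Finset.Icc (m + 1) (T / 2),
        (CL k * δA (k - m) + CL (k - m) * δA k + δA k * δA (k - m)) :=
  autocorrelation_change_approx_general T hTeven X XA CL CH δA hCL hCH hXA1 hXA0 ρ ρA hρ hρA m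
end

section
/- For a signal X of even length T perturbed only in its detail Haar coefficients by δ_D, the change in the (unnormalized) even-lag autocorrelation satisfies ρ_D(2m) − ρ(2m) = Σ_{k=m+1}^{T/2} [ C^H_k δ_D(k−m) + C^H_{k−m} δ_D(k) + δ_D(k) δ_D(k−m) ], where ρ(l) = Σ_{t=1}^{T−l} X_{t+l} X_t. -/
/-! Resynthesising a Haar pair after perturbing its detail coefficient by `δ k` moves the pair
`(X (2k-1), X (2k))` by `(δ k, -δ k) / √2`. At an even lag `2m` the autocorrelation sum is a sum,
over `k`, of products of pair `k` with pair `k - m`. In each, the cross terms combine into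
`C^H · δ` (the sign flip inside a pair produces the difference `X (2k-1) - X (2k)`), and the two
`δ · δ` terms, each carrying a factor `1/2`, add up to `δ k · δ (k - m)`. -/

open Finset Real

namespace Finset

theorem sum_Icc_add' {α M : Type*} [AddCommMonoid M] [AddCommMonoid α] [PartialOrder α]
    [IsOrderedCancelAddMonoid α] [ExistsAddOfLE α] [LocallyFiniteOrder α]
    (f : α → M) (a b c : α) : ∑ x ∈ Icc a b, f (x + c) = ∑ x ∈ Icc (a + c) (b + c), f x := by
  rw [← map_add_right_Icc, sum_map]
  rfl

theorem sum_Icc_one_two_mul_s9 {M : Type*} [AddCommMonoid M] (f : ℕ → M) :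
    ∀ N : ℕ, ∑ t ∈ Icc 1 (2 * N), f t = ∑ j ∈ Icc 1 N, (f (2 * j - 1) + f (2 * j))
  | 0 => by simp
  | N + 1 => by
    rw [sum_Icc_succ_top (by omega), ← sum_Icc_one_two_mul_s9 f N,
      show 2 * (N + 1) - 1 = 2 * N + 1 by omega, show 2 * (N + 1) = 2 * N + 1 + 1 by ring,
      sum_Icc_succ_top (by omega), sum_Icc_succ_top (by omega), add_assoc]

end Finset

theorem haar_resynthesis_odd (a b δ : ℝ) :
    (a + b) / √2 / √2 + ((a - b) / √2 + δ) / √2 = a + δ / √2 := by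
  have h2 : √2 * √2 = 2 := mul_self_sqrt zero_le_two
  field_simp
  linear_combination -a * h2

theorem haar_resynthesis_even (a b δ : ℝ) :
    (a + b) / √2 / √2 - ((a - b) / √2 + δ) / √2 = b - δ / √2 := by
  have h2 : √2 * √2 = 2 := mul_self_sqrt zero_le_two
  field_simp
  linear_combination -b * h2

theorem perturbed_pair_products_sub (a b c d ε δ : ℝ) :
    (a + ε / √2) * (c + δ / √2) + (b - ε / √2) * (d - δ / √2) - (a * c + b * d)
      = (a - b) / √2 * δ + (c - d) / √2 * ε + ε * δ := by
  have h2 : √2 * √2 = 2 := mul_self_sqrt zero_le_two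
  field_simp
  linear_combination -(ε * δ) * h2

theorem autocorrelation_change_detail_general
    (T : ℕ) (hTeven : Even T)
    (X XD CL CH δD : ℕ → ℝ)
    (hCL : ∀ k ∈ Finset.Icc 1 (T / 2),
      CL k = (X (2 * k - 1) + X (2 * k)) / Real.sqrt 2)
    (hCH : ∀ k ∈ Finset.Icc 1 (T / 2),
      CH k = (X (2 * k - 1) - X (2 * k)) / Real.sqrt 2)
    (hXD1 : ∀ k ∈ Finset.Icc 1 (T / 2),
      XD (2 * k - 1) = CL k / Real.sqrt 2 + (CH k + δD k) / Real.sqrt 2)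
    (hXD0 : ∀ k ∈ Finset.Icc 1 (T / 2),
      XD (2 * k) = CL k / Real.sqrt 2 - (CH k + δD k) / Real.sqrt 2)
    (ρ ρD : ℕ → ℝ)
    (hρ : ∀ l, ρ l = ∑ t ∈ Finset.Icc 1 (T - l), X (t + l) * X t)
    (hρD : ∀ l, ρD l = ∑ t ∈ Finset.Icc 1 (T - l), XD (t + l) * XD t)
    (m : ℕ) (hm : m + 1 ≤ T / 2) :
    ρD (2 * m) - ρ (2 * m) =
      ∑ k ∈ Finset.Icc (m + 1) (T / 2),
        (CH k * δD (k - m) + CH (k - m) * δD k + δD k * δD (k - m)) := by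
  have hXD_odd : ∀ k ∈ Icc 1 (T / 2), XD (2 * k - 1) = X (2 * k - 1) + δD k / √2 := fun k hk => by
    rw [hXD1 k hk, hCL k hk, hCH k hk, haar_resynthesis_odd]
  have hXD_even : ∀ k ∈ Icc 1 (T / 2), XD (2 * k) = X (2 * k) - δD k / √2 := fun k hk => by
    rw [hXD0 k hk, hCL k hk, hCH k hk, haar_resynthesis_even]
  have hlen : T - 2 * m = 2 * (T / 2 - m) := by obtain ⟨r, rfl⟩ := hTeven; omega
  have hshift : Icc (m + 1) (T / 2) = Icc (1 + m) (T / 2 - m + m) := by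
    rw [Nat.sub_add_cancel (by omega), add_comm]
  rw [hρ, hρD, hlen, ← sum_sub_distrib, sum_Icc_one_two_mul_s9, hshift, ← sum_Icc_add']
  refine sum_congr rfl fun j hj => ?_
  rw [mem_Icc] at hj
  have hjT : j ∈ Icc 1 (T / 2) := mem_Icc.2 (by omega)
  have hjm : j + m ∈ Icc 1 (T / 2) := mem_Icc.2 (by omega)
  rw [show 2 * j - 1 + 2 * m = 2 * (j + m) - 1 by omega, show 2 * j + 2 * m = 2 * (j + m) by ring,
    Nat.add_sub_cancel, hXD_odd j hjT, hXD_even j hjT, hXD_odd _ hjm, hXD_even _ hjm, hCH j hjT, hCH _ hjm]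
  linear_combination perturbed_pair_products_sub (X (2 * (j + m) - 1)) (X (2 * (j + m)))
    (X (2 * j - 1)) (X (2 * j)) (δD (j + m)) (δD j)

/-- Change in even-lag autocorrelation under detail-coefficient perturbations. -/
theorem autocorrelation_change_detail
    (T : ℕ) (hT : 0 < T) (hTeven : Even T)
    (X XD CL CH δD : ℕ → ℝ)
    (hCL : ∀ k ∈ Finset.Icc 1 (T / 2),
      CL k = (X (2 * k - 1) + X (2 * k)) / Real.sqrt 2)
    (hCH : ∀ k ∈ Finset.Icc 1 (T / 2),
      CH k = (X (2 * k - 1) - X (2 * k)) / Real.sqrt 2)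
    (hXD1 : ∀ k ∈ Finset.Icc 1 (T / 2),
      XD (2 * k - 1) = CL k / Real.sqrt 2 + (CH k + δD k) / Real.sqrt 2)
    (hXD0 : ∀ k ∈ Finset.Icc 1 (T / 2),
      XD (2 * k) = CL k / Real.sqrt 2 - (CH k + δD k) / Real.sqrt 2)
    (ρ ρD : ℕ → ℝ)
    (hρ : ∀ l, ρ l = ∑ t ∈ Finset.Icc 1 (T - l), X (t + l) * X t)
    (hρD : ∀ l, ρD l = ∑ t ∈ Finset.Icc 1 (T - l), XD (t + l) * XD t)
    (m : ℕ) (hm : m + 1 ≤ T / 2) :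
    ρD (2 * m) - ρ (2 * m) =
      ∑ k ∈ Finset.Icc (m + 1) (T / 2),
        (CH k * δD (k - m) + CH (k - m) * δD k + δD k * δD (k - m)) :=
  autocorrelation_change_detail_general T hTeven X XD CL CH δD hCL hCH hXD1 hXD0 ρ ρD hρ hρD m hm
end

section
/- Suppose a signal X of even length T is perturbed only in its detail Haar coefficients by δ_D, with |δ_D(k)| ≤ ε for all k. Then Σ_{m=0}^{T/2−1} |ρ_D(2m) − ρ(2m)| ≤ ε·(T/2 + 1)·Σ_{k=1}^{T/2} |C^H_k| + ε²·(T² + 2T)/8. -/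
/-!
The Haar step is orthogonal on each pair `(2k - 1, 2k)`, and a lag `2m` shifts pairs onto pairs,
so the even-lag autocorrelation is `∑ₖ (C^L_{k+m} C^L_k + C^H_{k+m} C^H_k)`. Perturbing only the
detail coefficients therefore changes it by `∑ₖ (δ_k C^H_{k+m} + δ_{k+m} C^H_k + δ_k δ_{k+m})`.
Over all lags `m < T/2` every `|C^H_k|` is met `T/2 + 1` times and there are
`(T/2)(T/2 + 1)/2 = (T² + 2T)/8` products `δ δ`.
-/

open Finset Real

noncomputable def autocorrelation (Z : ℕ → ℝ) (T l : ℕ) : ℝ :=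
  ∑ t ∈ Icc 1 (T - l), Z (t + l) * Z t

theorem sum_Icc_two_mul {M : Type*} [AddCommMonoid M] (f : ℕ → M) (n : ℕ) :
    ∑ t ∈ Icc 1 (2 * n), f t = ∑ k ∈ Icc 1 n, (f (2 * k - 1) + f (2 * k)) := by
  induction n with
  | zero => simp
  | succ n ih =>
    rw [show 2 * (n + 1) = 2 * n + 1 + 1 by ring, sum_Icc_succ_top (by omega),
      sum_Icc_succ_top (by omega), ih, sum_Icc_succ_top (by omega), add_assoc,
      show 2 * (n + 1) - 1 = 2 * n + 1 by omega]
    rfl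

theorem haar_inverse (a b : ℝ) :
    (a + b) / √2 / √2 + (a - b) / √2 / √2 = a ∧ (a + b) / √2 / √2 - (a - b) / √2 / √2 = b := by
  simp only [div_div, mul_self_sqrt zero_le_two]
  constructor <;> ring

theorem haar_pair_inner (a b c d : ℝ) :
    (a / √2 + b / √2) * (c / √2 + d / √2) + (a / √2 - b / √2) * (c / √2 - d / √2) =
      a * c + b * d := by
  have h : (√2)⁻¹ * (√2)⁻¹ = 1 / 2 := by rw [← mul_inv, mul_self_sqrt zero_le_two, one_div]
  linear_combination (2 * (a * c + b * d)) * h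

theorem autocorrelation_two_mul_eq_haar (Z L H : ℕ → ℝ) {N m : ℕ} (hm : m ≤ N)
    (hZ₁ : ∀ k ∈ Icc 1 N, Z (2 * k - 1) = L k / √2 + H k / √2)
    (hZ₀ : ∀ k ∈ Icc 1 N, Z (2 * k) = L k / √2 - H k / √2) :
    autocorrelation Z (2 * N) (2 * m) =
      ∑ k ∈ Icc 1 (N - m), (L (k + m) * L k + H (k + m) * H k) := by
  rw [autocorrelation, show 2 * N - 2 * m = 2 * (N - m) by omega, sum_Icc_two_mul]
  refine sum_congr rfl fun k hk => ?_
  rw [mem_Icc] at hk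
  have hk' : k ∈ Icc 1 N := mem_Icc.mpr ⟨hk.1, by omega⟩
  have hkm : k + m ∈ Icc 1 N := mem_Icc.mpr ⟨by omega, by omega⟩
  rw [show 2 * k - 1 + 2 * m = 2 * (k + m) - 1 by omega, show 2 * k + 2 * m = 2 * (k + m) by ring,
    hZ₁ k hk', hZ₀ k hk', hZ₁ _ hkm, hZ₀ _ hkm, haar_pair_inner]

theorem abs_mul_add_mul_add_mul_le {a b x y ε : ℝ} (ha : |a| ≤ ε) (hb : |b| ≤ ε) :
    |a * y + b * x + a * b| ≤ (ε * |y| + ε ^ 2 / 2) + (ε * |x| + ε ^ 2 / 2) := by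
  have hab : |a| * |b| ≤ ε * ε := mul_le_mul ha hb (abs_nonneg b) ((abs_nonneg a).trans ha)
  calc |a * y + b * x + a * b| ≤ |a| * |y| + |b| * |x| + |a| * |b| := by
        simpa only [abs_mul] using abs_add_three (a * y) (b * x) (a * b)
    _ ≤ ε * |y| + ε * |x| + ε * ε := by gcongr
    _ = _ := by ring

-- Each `j = k + m` occurs for the `j` lags `m < j`, each `k` for the `N + 1 - k` lags `m ≤ N - k`.
theorem sum_range_sum_Icc_add_eq (f : ℕ → ℝ) (N : ℕ) :
    ∑ m ∈ range N, ∑ k ∈ Icc 1 (N - m), (f (k + m) + f k) = (N + 1) * ∑ k ∈ Icc 1 N, f k := by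
  have hshift : ∑ m ∈ range N, ∑ k ∈ Icc 1 (N - m), f (k + m) = ∑ j ∈ Icc 1 N, j * f j := by
    calc ∑ m ∈ range N, ∑ k ∈ Icc 1 (N - m), f (k + m)
        = ∑ m ∈ range N, ∑ j ∈ Icc (m + 1) N, f j := sum_congr rfl fun m hm => by
          have := sum_map (Icc 1 (N - m)) (addRightEmbedding m) f
          rw [map_add_right_Icc, Nat.sub_add_cancel (mem_range.mp hm).le, add_comm] at this
          exact this.symm
      _ = ∑ j ∈ Icc 1 N, ∑ m ∈ range j, f j :=
          sum_comm' fun m j => by simp only [mem_Icc, mem_range]; omega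
      _ = ∑ j ∈ Icc 1 N, j * f j := by simp
  have hfix : ∑ m ∈ range N, ∑ k ∈ Icc 1 (N - m), f k = ∑ k ∈ Icc 1 N, (N + 1 - k) * f k := by
    calc ∑ m ∈ range N, ∑ k ∈ Icc 1 (N - m), f k
        = ∑ k ∈ Icc 1 N, ∑ m ∈ range (N + 1 - k), f k :=
          sum_comm' fun m k => by simp only [mem_Icc, mem_range]; omega
      _ = ∑ k ∈ Icc 1 N, (N + 1 - k) * f k := sum_congr rfl fun k hk => by
          rw [sum_const, card_range, nsmul_eq_mul, Nat.cast_sub (by grind), Nat.cast_add_one]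
  simp only [sum_add_distrib]
  rw [hshift, hfix, ← sum_add_distrib, mul_sum]
  exact sum_congr rfl fun _ _ => by ring

theorem autocorrelation_bound_detail_general
    (T : ℕ) (hTeven : Even T)
    (X XD CL CH δD : ℕ → ℝ) (ε : ℝ)
    (hδ : ∀ k ∈ Finset.Icc 1 (T / 2), |δD k| ≤ ε)
    (hCL : ∀ k ∈ Finset.Icc 1 (T / 2),
      CL k = (X (2 * k - 1) + X (2 * k)) / Real.sqrt 2)
    (hCH : ∀ k ∈ Finset.Icc 1 (T / 2),
      CH k = (X (2 * k - 1) - X (2 * k)) / Real.sqrt 2)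
    (hXD1 : ∀ k ∈ Finset.Icc 1 (T / 2),
      XD (2 * k - 1) = CL k / Real.sqrt 2 + (CH k + δD k) / Real.sqrt 2)
    (hXD0 : ∀ k ∈ Finset.Icc 1 (T / 2),
      XD (2 * k) = CL k / Real.sqrt 2 - (CH k + δD k) / Real.sqrt 2)
    (ρ ρD : ℕ → ℝ)
    (hρ : ∀ l, ρ l = ∑ t ∈ Finset.Icc 1 (T - l), X (t + l) * X t)
    (hρD : ∀ l, ρD l = ∑ t ∈ Finset.Icc 1 (T - l), XD (t + l) * XD t) :
    ∑ m ∈ Finset.range (T / 2), |ρD (2 * m) - ρ (2 * m)| ≤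
      ε * ((T : ℝ) / 2 + 1) * ∑ k ∈ Finset.Icc 1 (T / 2), |CH k| +
      ε ^ 2 * ((T : ℝ) ^ 2 + 2 * (T : ℝ)) / 8 := by
  obtain ⟨N, rfl⟩ : ∃ N, T = 2 * N := ⟨T / 2, (Nat.two_mul_div_two_of_even hTeven).symm⟩
  obtain rfl : ρ = autocorrelation X (2 * N) := funext hρ
  obtain rfl : ρD = autocorrelation XD (2 * N) := funext hρD
  simp only [Nat.mul_div_cancel_left N two_pos] at hδ hCL hCH hXD1 hXD0 ⊢
  have hX₁ : ∀ k ∈ Icc 1 N, X (2 * k - 1) = CL k / √2 + CH k / √2 := fun k hk => by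
    rw [hCL k hk, hCH k hk, (haar_inverse _ _).1]
  have hX₀ : ∀ k ∈ Icc 1 N, X (2 * k) = CL k / √2 - CH k / √2 := fun k hk => by
    rw [hCL k hk, hCH k hk, (haar_inverse _ _).2]
  have hlag : ∀ m ∈ range N, autocorrelation XD (2 * N) (2 * m) - autocorrelation X (2 * N) (2 * m)
      = ∑ k ∈ Icc 1 (N - m), (δD k * CH (k + m) + δD (k + m) * CH k + δD k * δD (k + m)) :=
    fun m hm => by
      have hm : m ≤ N := (mem_range.mp hm).le
      rw [autocorrelation_two_mul_eq_haar XD CL (CH + δD) hm hXD1 hXD0,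
        autocorrelation_two_mul_eq_haar X CL CH hm hX₁ hX₀, ← sum_sub_distrib]
      exact sum_congr rfl fun _ _ => by simp only [Pi.add_apply]; ring
  calc ∑ m ∈ range N, |autocorrelation XD (2 * N) (2 * m) - autocorrelation X (2 * N) (2 * m)|
      ≤ ∑ m ∈ range N, ∑ k ∈ Icc 1 (N - m),
          ((ε * |CH (k + m)| + ε ^ 2 / 2) + (ε * |CH k| + ε ^ 2 / 2)) :=
        sum_le_sum fun m hm => by
          rw [hlag m hm]
          refine (abs_sum_le_sum_abs _ _).trans (sum_le_sum fun k hk => ?_)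
          simp only [mem_Icc, mem_range] at hm hk
          exact abs_mul_add_mul_add_mul_le (hδ k (mem_Icc.mpr (by omega)))
            (hδ (k + m) (mem_Icc.mpr (by omega)))
    _ = (N + 1) * ∑ k ∈ Icc 1 N, (ε * |CH k| + ε ^ 2 / 2) :=
        sum_range_sum_Icc_add_eq (fun k => ε * |CH k| + ε ^ 2 / 2) N
    _ = _ := by
        rw [sum_add_distrib, ← mul_sum, sum_const, Nat.card_Icc, nsmul_eq_mul]
        push_cast
        ring

/-- Bound on the total absolute change of even-lag autocorrelations under
bounded detail-coefficient perturbations. -/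
theorem autocorrelation_bound_detail
    (T : ℕ) (hT : 0 < T) (hTeven : Even T)
    (X XD CL CH δD : ℕ → ℝ) (ε : ℝ) (hε : 0 ≤ ε)
    (hδ : ∀ k ∈ Finset.Icc 1 (T / 2), |δD k| ≤ ε)
    (hCL : ∀ k ∈ Finset.Icc 1 (T / 2),
      CL k = (X (2 * k - 1) + X (2 * k)) / Real.sqrt 2)
    (hCH : ∀ k ∈ Finset.Icc 1 (T / 2),
      CH k = (X (2 * k - 1) - X (2 * k)) / Real.sqrt 2)
    (hXD1 : ∀ k ∈ Finset.Icc 1 (T / 2),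
      XD (2 * k - 1) = CL k / Real.sqrt 2 + (CH k + δD k) / Real.sqrt 2)
    (hXD0 : ∀ k ∈ Finset.Icc 1 (T / 2),
      XD (2 * k) = CL k / Real.sqrt 2 - (CH k + δD k) / Real.sqrt 2)
    (ρ ρD : ℕ → ℝ)
    (hρ : ∀ l, ρ l = ∑ t ∈ Finset.Icc 1 (T - l), X (t + l) * X t)
    (hρD : ∀ l, ρD l = ∑ t ∈ Finset.Icc 1 (T - l), XD (t + l) * XD t) :
    ∑ m ∈ Finset.range (T / 2), |ρD (2 * m) - ρ (2 * m)| ≤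
      ε * ((T : ℝ) / 2 + 1) * ∑ k ∈ Finset.Icc 1 (T / 2), |CH k| +
      ε ^ 2 * ((T : ℝ) ^ 2 + 2 * (T : ℝ)) / 8 :=
  autocorrelation_bound_detail_general T hTeven X XD CL CH δD ε hδ hCL hCH hXD1 hXD0 ρ ρD hρ hρD
end
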